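/- Let H be a complex Hilbert space, α ∈ (1, 2), γ ∈ (0, 1) and M > 0. There exists θ₀ ∈ (π/2, π) such that for every θ ∈ (π/2, θ₀) there is a constant c > 0, depending only on α, γ, θ, M, with the property: for every time step τ > 0, every z ∈ D(τ,θ), writing w = δ_τ(e^{−zτ}) with δ_τ the BDF3 generating symbol, and for all bounded linear operators R₁, R₂ on H satisfying ‖R₁‖ ≤ M|z|^{−α}, ‖R₂‖ ≤ M|z|^{−α} and the resolvent identity R₂ − R₁ = (z^α − w^α) R₂ ∘ R₁, one has ‖R₂ · w^{3−γ} (ρ₂(e^{−zτ})/2) τ³ − R₁ · z^{−γ}‖ ≤ c τ³ |z|^{3−α−γ}. -/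

import Mathlib

/-!
Put `x = zτ`. Then `τ δ_τ(e^{-zτ}) = δ₁(e^{-x})` and every quantity is homogeneous in `τ`, so it
suffices to bound `x^α - δ₁(e^{-x})^α` by `C |x|^(α+3)` and
`δ₁(e^{-x})^(3-γ) ρ₂(e^{-x}) / 2 - x^(-γ)` by `C |x|^(3-γ)` for `x` in the sector `|arg x| ≤ 2π/3`
with `|x| ≤ 3π/2`, which contains `τ D(τ,θ)` for `θ < 2π/3`. Near `0` these bounds are the third
order consistency of BDF3, `δ₁(e^{-x}) = x + O(x⁴)`, together with `x³ ρ₂(e^{-x}) = 2 + O(x³)`;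
away from `0` the functions are bounded because `1 - e^{-x}` does not vanish for `0 < |x| < 2π`.
The operator bound then follows from `A R₂ - B R₁ = A (R₂ - R₁) + (A - B) R₁` and
`‖R₂ - R₁‖ ≤ |z^α - w^α| ‖R₂‖ ‖R₁‖`.
-/open Complex Set

/-- The BDF3 generating symbol `δ_τ(ξ) = τ⁻¹(11/6 − 3ξ + (3/2)ξ² − (1/3)ξ³)`. -/
noncomputable def bdf3 (τ : ℝ) (ξ : ℂ) : ℂ :=
  (τ : ℂ)⁻¹ * (11 / 6 - 3 * ξ + (3 / 2) * ξ ^ 2 - (1 / 3) * ξ ^ 3)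

/-- The region `D(τ,θ)`: nonzero `z` with either `|arg z| = θ` and `|Im z| ≤ π/τ`,
or `|z| ≤ 1/τ` and `|arg z| ≤ θ`. -/
def Dset (τ θ : ℝ) : Set ℂ :=
  {z : ℂ | z ≠ 0 ∧
    ((|z.arg| = θ ∧ |z.im| ≤ Real.pi / τ) ∨ (‖z‖ ≤ 1 / τ ∧ |z.arg| ≤ θ))}

/-- Closed form of the generating function `Σ_{n≥1} n² ξⁿ`. -/
noncomputable def rho2 (ξ : ℂ) : ℂ := ξ * (1 + ξ) / (1 - ξ) ^ 3

open scoped Real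

lemma ofReal_mul_cpow {t : ℝ} (ht : 0 ≤ t) (a s : ℂ) :
    ((t : ℂ) * a) ^ s = (t : ℂ) ^ s * a ^ s := by
  rcases ht.eq_or_lt with rfl | ht
  · rcases eq_or_ne s 0 with rfl | hs
    · simp
    · simp [zero_cpow hs]
  rcases eq_or_ne a 0 with rfl | ha
  · rcases eq_or_ne s 0 with rfl | hs
    · simp
    · simp [zero_cpow hs]
  rw [cpow_def_of_ne_zero (mul_ne_zero (ofReal_ne_zero.2 ht.ne') ha), log_ofReal_mul ht ha,
    add_mul, Complex.exp_add, ← cpow_def_of_ne_zero ha, ofReal_log ht.le,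
    ← cpow_def_of_ne_zero (ofReal_ne_zero.2 ht.ne')]

lemma mul_cpow_of_arg_add_mem {x y : ℂ} (hx : x ≠ 0) (hy : y ≠ 0)
    (h : arg x + arg y ∈ Ioc (-π) π) (s : ℂ) : (x * y) ^ s = x ^ s * y ^ s := by
  rw [cpow_def_of_ne_zero (mul_ne_zero hx hy), log_mul hx hy h, add_mul, Complex.exp_add,
    ← cpow_def_of_ne_zero hx, ← cpow_def_of_ne_zero hy]

lemma abs_arg_le_norm_log (u : ℂ) : |arg u| ≤ ‖log u‖ := by
  simpa only [log_im] using abs_im_le_norm (log u)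

lemma norm_log_le_of_norm_sub_one_le {u : ℂ} (hu : ‖u - 1‖ ≤ 1 / 2) :
    ‖log u‖ ≤ 3 / 2 * ‖u - 1‖ := by
  simpa using norm_log_one_add_half_le_self hu

lemma norm_cpow_sub_one_le {u s : ℂ} (hu : ‖u - 1‖ ≤ 1 / 2) (hs : ‖s‖ * ‖u - 1‖ ≤ 2 / 3) :
    ‖u ^ s - 1‖ ≤ 3 * ‖s‖ * ‖u - 1‖ := by
  have hu0 : u ≠ 0 := by rintro rfl; norm_num at hu
  have hlog := norm_log_le_of_norm_sub_one_le hu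
  have hexp : ‖log u * s‖ ≤ 3 / 2 * ‖s‖ * ‖u - 1‖ := by
    rw [norm_mul]; nlinarith [norm_nonneg s]
  rw [cpow_def_of_ne_zero hu0]
  calc ‖Complex.exp (log u * s) - 1‖ ≤ 2 * ‖log u * s‖ := norm_exp_sub_one_le (by linarith)
    _ ≤ 3 * ‖s‖ * ‖u - 1‖ := by linarith

lemma one_sub_exp_neg_ne_zero {x : ℂ} (hx0 : x ≠ 0) (hx : ‖x‖ < 2 * π) :
    1 - Complex.exp (-x) ≠ 0 := by
  rw [sub_ne_zero, ne_comm, Ne, Complex.exp_eq_one_iff]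
  rintro ⟨n, hn⟩
  have hn0 : n ≠ 0 := by rintro rfl; simp_all
  have : ‖x‖ = |(n : ℝ)| * (2 * π) := by
    rw [← norm_neg, hn]; simp [abs_of_pos Real.pi_pos]
  have : (1 : ℝ) ≤ |(n : ℝ)| := by exact_mod_cast Int.one_le_abs hn0
  nlinarith [Real.pi_pos]

open Finset in
noncomputable def expTaylorRem (n : ℕ) (z : ℂ) : ℂ :=
  Complex.exp z - ∑ m ∈ range n, z ^ m / m.factorial

lemma norm_expTaylorRem_neg_mul_le {n k : ℕ} (hn : 0 < n) {x : ℂ} (hx : k * ‖x‖ ≤ 1) :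
    ‖expTaylorRem n (-(k * x))‖ ≤ (n + 1) / (n.factorial * n) * k ^ n * ‖x‖ ^ n := by
  have hkx : ‖-((k : ℂ) * x)‖ = k * ‖x‖ := by simp
  have := Complex.exp_bound (hkx ▸ hx) hn
  rw [hkx] at this
  refine this.trans_eq ?_
  push_cast
  ring

lemma exp_neg_pow (x : ℂ) (k : ℕ) : Complex.exp (-x) ^ k = Complex.exp (-(k * x)) := by
  rw [← Complex.exp_nat_mul]; ring_nf

lemma norm_bdf3_one_exp_neg_sub_self_le {x : ℂ} (hx : ‖x‖ ≤ 1 / 3) :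
    ‖bdf3 1 (Complex.exp (-x)) - x‖ ≤ 3 * ‖x‖ ^ 4 := by
  set r : ℕ → ℂ := fun k => expTaylorRem 4 (-(k * x))
  have hr (k : ℕ) (hk : k ≤ 3) : ‖r k‖ ≤ 5 / 96 * k ^ 4 * ‖x‖ ^ 4 := by
    have : (k : ℝ) ≤ 3 := by exact_mod_cast hk
    refine (norm_expTaylorRem_neg_mul_le four_pos (by nlinarith [norm_nonneg x])).trans_eq ?_
    norm_num [Nat.factorial]
  have key : bdf3 1 (Complex.exp (-x)) - x = -3 * r 1 + 3 / 2 * r 2 - 1 / 3 * r 3 := by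
    simp only [r, expTaylorRem, bdf3, exp_neg_pow, Finset.sum_range_succ]
    norm_num [Nat.factorial]
    ring
  have h1 := hr 1 (by norm_num)
  have h2 := hr 2 (by norm_num)
  have h3 := hr 3 (by norm_num)
  push_cast at h1 h2 h3
  rw [key]
  calc _ ≤ 3 * ‖r 1‖ + 3 / 2 * ‖r 2‖ + 1 / 3 * ‖r 3‖ := by
        refine (norm_sub_le _ _).trans (add_le_add ((norm_add_le _ _).trans ?_) ?_) <;>
          norm_num [norm_mul]
    _ ≤ 3 * ‖x‖ ^ 4 := by linarith [pow_nonneg (norm_nonneg x) 4]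

lemma norm_div_two_le_norm_one_sub_exp_neg {x : ℂ} (hx : ‖x‖ ≤ 1 / 2) :
    ‖x‖ / 2 ≤ ‖1 - Complex.exp (-x)‖ := by
  have h := norm_exp_sub_one_sub_id_le (x := -x) (by rw [norm_neg]; linarith)
  rw [norm_neg, show Complex.exp (-x) - 1 - -x = x - (1 - Complex.exp (-x)) by ring] at h
  nlinarith [norm_sub_norm_le x (1 - Complex.exp (-x)),
    mul_le_mul_of_nonneg_left hx (norm_nonneg x)]

lemma norm_pow_three_mul_rho2_exp_neg_sub_one_le {x : ℂ} (hx0 : x ≠ 0) (hx : ‖x‖ ≤ 1 / 6) :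
    ‖x ^ 3 * rho2 (Complex.exp (-x)) / 2 - 1‖ ≤ 2 * ‖x‖ ^ 3 := by
  set ξ := Complex.exp (-x)
  have hxpos : 0 < ‖x‖ := norm_pos_iff.2 hx0
  have hden : ‖x‖ / 2 ≤ ‖1 - ξ‖ := norm_div_two_le_norm_one_sub_exp_neg (by linarith)
  have hξ : 1 - ξ ≠ 0 := norm_pos_iff.1 (by linarith)
  set r7 : ℕ → ℂ := fun k => expTaylorRem 7 (-(k * x))
  set r4 : ℕ → ℂ := fun k => expTaylorRem 4 (-(k * x))
  have hr7 (k : ℕ) (hk : k ≤ 3) : ‖r7 k‖ ≤ 1 / 4410 * k ^ 7 * ‖x‖ ^ 7 := by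
    have : (k : ℝ) ≤ 3 := by exact_mod_cast hk
    refine (norm_expTaylorRem_neg_mul_le (by norm_num) (by nlinarith [norm_nonneg x])).trans_eq ?_
    norm_num [Nat.factorial]
  have hr4 (k : ℕ) (hk : k ≤ 3) : ‖r4 k‖ ≤ 5 / 96 * k ^ 4 * ‖x‖ ^ 4 := by
    have : (k : ℝ) ≤ 3 := by exact_mod_cast hk
    refine (norm_expTaylorRem_neg_mul_le four_pos (by nlinarith [norm_nonneg x])).trans_eq ?_
    norm_num [Nat.factorial]
  -- the Taylor polynomials of degree `≤ 6` cancel, leaving only remainders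
  have key : x ^ 3 * ξ * (1 + ξ) - 2 * (1 - ξ) ^ 3 =
      6 * r7 1 - 6 * r7 2 + 2 * r7 3 + x ^ 3 * r4 1 + x ^ 3 * r4 2 := by
    simp only [r7, r4, ξ, expTaylorRem, Finset.sum_range_succ]
    rw [← exp_neg_pow x 2, ← exp_neg_pow x 3]
    norm_num [Nat.factorial]
    ring
  have hN : ‖x ^ 3 * ξ * (1 + ξ) - 2 * (1 - ξ) ^ 3‖ ≤ 3 * ‖x‖ ^ 7 := by
    have h1 := hr7 1 (by norm_num)
    have h2 := hr7 2 (by norm_num)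
    have h3 := hr7 3 (by norm_num)
    have h4 := mul_le_mul_of_nonneg_left (hr4 1 (by norm_num)) (pow_nonneg (norm_nonneg x) 3)
    have h5 := mul_le_mul_of_nonneg_left (hr4 2 (by norm_num)) (pow_nonneg (norm_nonneg x) 3)
    push_cast at h1 h2 h3 h4 h5
    rw [key]
    calc _ ≤ 6 * ‖r7 1‖ + 6 * ‖r7 2‖ + 2 * ‖r7 3‖ + ‖x‖ ^ 3 * ‖r4 1‖ + ‖x‖ ^ 3 * ‖r4 2‖ := by
          refine ((norm_add_le _ _).trans (add_le_add ((norm_add_le _ _).trans (add_le_add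
            ((norm_add_le _ _).trans (add_le_add (norm_sub_le _ _) le_rfl)) le_rfl))
            le_rfl)).trans_eq ?_
          norm_num [norm_mul]
      _ ≤ 3 * ‖x‖ ^ 7 := by
          have : ‖x‖ ^ 3 * ‖x‖ ^ 4 = ‖x‖ ^ 7 := by ring
          nlinarith [pow_nonneg (norm_nonneg x) 7]
  have hsplit : x ^ 3 * rho2 ξ / 2 - 1 =
      (x ^ 3 * ξ * (1 + ξ) - 2 * (1 - ξ) ^ 3) / (2 * (1 - ξ) ^ 3) := by
    rw [rho2]; field_simp
  have hden₀ : 0 < ‖2 * (1 - ξ) ^ 3‖ := norm_pos_iff.2 (mul_ne_zero two_ne_zero (pow_ne_zero 3 hξ))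
  rw [hsplit, norm_div, div_le_iff₀ hden₀, norm_mul, norm_pow]
  calc _ ≤ 3 * ‖x‖ ^ 7 := hN
    _ ≤ 2 * ‖x‖ ^ 3 * (2 * (‖x‖ / 2) ^ 3) := by nlinarith [pow_pos hxpos 6]
    _ ≤ 2 * ‖x‖ ^ 3 * (‖(2 : ℂ)‖ * ‖1 - ξ‖ ^ 3) := by norm_num; gcongr

lemma norm_bdf3_one_exp_neg_cpow_sub_cpow_le {x : ℂ} (hx0 : x ≠ 0) (hx : ‖x‖ ≤ 1 / 6)
    (harg : |arg x| ≤ 2 * π / 3) {s : ℝ} (hs : |s| ≤ 3) :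
    ‖bdf3 1 (Complex.exp (-x)) ^ (s : ℂ) - x ^ (s : ℂ)‖ ≤ 27 * ‖x‖ ^ 3 * ‖x‖ ^ s := by
  have hxpos : 0 < ‖x‖ := norm_pos_iff.2 hx0
  have hx3 : ‖x‖ ^ 3 ≤ 1 / 216 := by
    calc ‖x‖ ^ 3 ≤ (1 / 6) ^ 3 := by gcongr
      _ = 1 / 216 := by norm_num
  set u := bdf3 1 (Complex.exp (-x)) / x
  have hxu : bdf3 1 (Complex.exp (-x)) = x * u := (mul_div_cancel₀ _ hx0).symm
  have hu : ‖u - 1‖ ≤ 3 * ‖x‖ ^ 3 := by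
    have hf := norm_bdf3_one_exp_neg_sub_self_le (x := x) (by linarith)
    rw [show u - 1 = (bdf3 1 (Complex.exp (-x)) - x) / x by rw [hxu]; field_simp, norm_div,
      div_le_iff₀ hxpos]
    linarith
  have hu0 : u ≠ 0 := by intro h; rw [h] at hu; norm_num at hu; linarith
  have hargu : |arg u| ≤ 1 :=
    (abs_arg_le_norm_log u).trans <| (norm_log_le_of_norm_sub_one_le (by linarith)).trans
      (by linarith)
  have hsum : arg x + arg u ∈ Ioc (-π) π := by
    constructor <;> linarith [abs_le.1 harg, abs_le.1 hargu, Real.pi_gt_three]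
  have hs' : ‖(s : ℂ)‖ ≤ 3 := by rwa [norm_real, Real.norm_eq_abs]
  have hus : ‖u ^ (s : ℂ) - 1‖ ≤ 27 * ‖x‖ ^ 3 :=
    (norm_cpow_sub_one_le (by linarith) (by nlinarith [norm_nonneg (s : ℂ)])).trans
      (by nlinarith [norm_nonneg (s : ℂ), norm_nonneg (u - 1)])
  rw [hxu, mul_cpow_of_arg_add_mem hx0 hu0 hsum, ← mul_sub_one, norm_mul, norm_cpow_real,
    mul_comm]
  exact mul_le_mul_of_nonneg_right hus (by positivity)

lemma norm_bdf3_one_exp_neg_cpow_mul_rho2_sub_cpow_le {x : ℂ} (hx0 : x ≠ 0) (hx : ‖x‖ ≤ 1 / 6)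
    (harg : |arg x| ≤ 2 * π / 3) {γ : ℝ} (hγ₀ : 0 ≤ γ) (hγ₆ : γ ≤ 6) :
    ‖bdf3 1 (Complex.exp (-x)) ^ ((3 - γ : ℝ) : ℂ) * (rho2 (Complex.exp (-x)) / 2) -
        x ^ (-(γ : ℂ))‖ ≤ 56 * ‖x‖ ^ (3 - γ) := by
  have hxpos : 0 < ‖x‖ := norm_pos_iff.2 hx0
  set f := bdf3 1 (Complex.exp (-x))
  set ρ := rho2 (Complex.exp (-x)) / 2
  have hP : ‖x ^ 3 * ρ - 1‖ ≤ 2 * ‖x‖ ^ 3 := by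
    simpa only [ρ, mul_div_assoc] using norm_pow_three_mul_rho2_exp_neg_sub_one_le hx0 hx
  have hx3 : ‖x‖ ^ 3 ≤ 1 / 216 := by
    calc ‖x‖ ^ 3 ≤ (1 / 6) ^ 3 := by gcongr
      _ = 1 / 216 := by norm_num
  have hρ : ‖x‖ ^ 3 * ‖ρ‖ ≤ 2 := by
    have := norm_le_norm_add_norm_sub' (x ^ 3 * ρ) 1
    rw [norm_mul, norm_pow] at this
    norm_num at this
    linarith
  have hpow : x ^ ((3 - γ : ℝ) : ℂ) = x ^ 3 * x ^ (-(γ : ℂ)) := by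
    rw [show ((3 - γ : ℝ) : ℂ) = (3 : ℕ) + -(γ : ℂ) by push_cast; ring, cpow_add _ _ hx0,
      cpow_natCast]
  have hrpow : ‖x‖ ^ (3 - γ) = ‖x‖ ^ 3 * ‖x‖ ^ (-γ) := by
    rw [sub_eq_add_neg, Real.rpow_add hxpos]; norm_cast
  have hfx := norm_bdf3_one_exp_neg_cpow_sub_cpow_le hx0 hx harg (s := 3 - γ)
    (by rw [abs_le]; constructor <;> linarith)
  have key : f ^ ((3 - γ : ℝ) : ℂ) * ρ - x ^ (-(γ : ℂ)) =
      (f ^ ((3 - γ : ℝ) : ℂ) - x ^ ((3 - γ : ℝ) : ℂ)) * ρ + x ^ (-(γ : ℂ)) * (x ^ 3 * ρ - 1) := by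
    rw [hpow]; ring
  have hxγ : ‖x ^ (-(γ : ℂ))‖ = ‖x‖ ^ (-γ) := by rw [← ofReal_neg, norm_cpow_real]
  rw [key]
  refine (norm_add_le _ _).trans ?_
  rw [norm_mul, norm_mul, hxγ]
  calc _ ≤ 27 * ‖x‖ ^ 3 * ‖x‖ ^ (3 - γ) * ‖ρ‖ + ‖x‖ ^ (-γ) * (2 * ‖x‖ ^ 3) := by
        gcongr
    _ = 27 * (‖x‖ ^ 3 * ‖ρ‖) * ‖x‖ ^ (3 - γ) + 2 * ‖x‖ ^ (3 - γ) := by rw [hrpow]; ring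
    _ ≤ 56 * ‖x‖ ^ (3 - γ) := by nlinarith [Real.rpow_nonneg (norm_nonneg x) (3 - γ)]

lemma exists_bound_bdf3_one_exp_neg_and_rho2_exp_neg {r R : ℝ} (hr : 0 < r) (hR : R < 2 * π) :
    ∃ B, ∀ x : ℂ, r ≤ ‖x‖ → ‖x‖ ≤ R →
      ‖bdf3 1 (Complex.exp (-x))‖ ≤ B ∧ ‖rho2 (Complex.exp (-x))‖ ≤ B := by
  set K := Metric.closedBall (0 : ℂ) R \ Metric.ball 0 r
  have hK : IsCompact K := (isCompact_closedBall 0 R).diff Metric.isOpen_ball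
  have hmem (x : ℂ) (h₁ : r ≤ ‖x‖) (h₂ : ‖x‖ ≤ R) : x ∈ K := by simp [K, h₁, h₂]
  have hf : ContinuousOn (fun x : ℂ => bdf3 1 (Complex.exp (-x))) K := by
    unfold bdf3; fun_prop
  have hρ : ContinuousOn (fun x : ℂ => rho2 (Complex.exp (-x))) K := by
    refine ContinuousOn.div (by fun_prop) (by fun_prop) fun x hx => pow_ne_zero 3 ?_
    simp only [K, Set.mem_sdiff, Metric.mem_closedBall, Metric.mem_ball, dist_zero_right,
      not_lt] at hx
    exact one_sub_exp_neg_ne_zero (norm_pos_iff.1 (hr.trans_le hx.2)) (hx.1.trans_lt hR)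
  obtain ⟨B₁, hB₁⟩ := hK.exists_bound_of_continuousOn hf
  obtain ⟨B₂, hB₂⟩ := hK.exists_bound_of_continuousOn hρ
  exact ⟨max B₁ B₂, fun x h₁ h₂ => ⟨(hB₁ x (hmem x h₁ h₂)).trans (le_max_left _ _),
    (hB₂ x (hmem x h₁ h₂)).trans (le_max_right _ _)⟩⟩

lemma exists_pos_le_mul_rpow_of_near_of_far {E : Type*} [SeminormedAddCommGroup E]
    {φ : E → ℝ} {S : Set E} {C₁ r R p B : ℝ} (hC₁ : 0 < C₁) (hr : 0 < r) (hp : 0 ≤ p)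
    (near : ∀ x ∈ S, ‖x‖ ≤ r → φ x ≤ C₁ * ‖x‖ ^ p)
    (far : ∀ x ∈ S, r ≤ ‖x‖ → ‖x‖ ≤ R → φ x ≤ B) :
    ∃ C > 0, ∀ x ∈ S, ‖x‖ ≤ R → φ x ≤ C * ‖x‖ ^ p := by
  refine ⟨max C₁ (max B 0 / r ^ p), lt_max_of_lt_left hC₁, fun x hx hxR => ?_⟩
  rcases le_total ‖x‖ r with h | h
  · exact (near x hx h).trans (mul_le_mul_of_nonneg_right (le_max_left _ _) (by positivity))
  · have hrp : 0 < r ^ p := by positivity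
    calc φ x ≤ max B 0 := (far x hx h hxR).trans (le_max_left _ _)
      _ = max B 0 / r ^ p * r ^ p := by field_simp
      _ ≤ max C₁ (max B 0 / r ^ p) * ‖x‖ ^ p :=
        mul_le_mul (le_max_right _ _) (Real.rpow_le_rpow hr.le h hp) hrp.le
          (le_max_of_le_left hC₁.le)

lemma exists_norm_cpow_sub_bdf3_one_exp_neg_cpow_le {α R : ℝ} (hα₀ : 0 ≤ α) (hα₃ : α ≤ 3)
    (hR : R < 2 * π) :
    ∃ C > 0, ∀ x : ℂ, x ≠ 0 → |arg x| ≤ 2 * π / 3 → ‖x‖ ≤ R →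
      ‖x ^ (α : ℂ) - bdf3 1 (Complex.exp (-x)) ^ (α : ℂ)‖ ≤ C * ‖x‖ ^ (α + 3) := by
  obtain ⟨B, hB⟩ :=
    exists_bound_bdf3_one_exp_neg_and_rho2_exp_neg (by norm_num : (0 : ℝ) < 1 / 6) hR
  obtain ⟨C, hC, h⟩ := exists_pos_le_mul_rpow_of_near_of_far
    (S := {x : ℂ | x ≠ 0 ∧ |arg x| ≤ 2 * π / 3}) (R := R) (p := α + 3) (B := R ^ α + B ^ α)
    (φ := fun x => ‖x ^ (α : ℂ) - bdf3 1 (Complex.exp (-x)) ^ (α : ℂ)‖)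
    (by norm_num : (0 : ℝ) < 27) (by norm_num : (0 : ℝ) < 1 / 6) (by linarith)
    (fun x hx h => by
      rw [norm_sub_rev, Real.rpow_add (norm_pos_iff.2 hx.1), mul_comm (‖x‖ ^ α)]
      exact (norm_bdf3_one_exp_neg_cpow_sub_cpow_le hx.1 h hx.2
        (by rw [abs_le]; constructor <;> linarith)).trans_eq (by norm_cast; ring))
    (fun x _ h₁ h₂ => by
      refine (norm_sub_le _ _).trans ?_
      rw [norm_cpow_real, norm_cpow_real]
      gcongr
      exact (hB x h₁ h₂).1)
  exact ⟨C, hC, fun x hx0 harg hx => h x ⟨hx0, harg⟩ hx⟩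

lemma exists_norm_bdf3_one_exp_neg_cpow_mul_rho2_sub_cpow_le {γ R : ℝ} (hγ₀ : 0 ≤ γ)
    (hγ₃ : γ ≤ 3) (hR : R < 2 * π) :
    ∃ C > 0, ∀ x : ℂ, x ≠ 0 → |arg x| ≤ 2 * π / 3 → ‖x‖ ≤ R →
      ‖bdf3 1 (Complex.exp (-x)) ^ ((3 - γ : ℝ) : ℂ) * (rho2 (Complex.exp (-x)) / 2) -
        x ^ (-(γ : ℂ))‖ ≤ C * ‖x‖ ^ (3 - γ) := by
  obtain ⟨B, hB⟩ :=
    exists_bound_bdf3_one_exp_neg_and_rho2_exp_neg (by norm_num : (0 : ℝ) < 1 / 6) hR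
  obtain ⟨C, hC, h⟩ := exists_pos_le_mul_rpow_of_near_of_far
    (S := {x : ℂ | x ≠ 0 ∧ |arg x| ≤ 2 * π / 3}) (R := R) (p := 3 - γ)
    (B := B ^ (3 - γ) * (B / 2) + (1 / 6) ^ (-γ))
    (φ := fun x => ‖bdf3 1 (Complex.exp (-x)) ^ ((3 - γ : ℝ) : ℂ) *
      (rho2 (Complex.exp (-x)) / 2) - x ^ (-(γ : ℂ))‖)
    (by norm_num : (0 : ℝ) < 56) (by norm_num : (0 : ℝ) < 1 / 6) (by linarith)
    (fun x hx h => norm_bdf3_one_exp_neg_cpow_mul_rho2_sub_cpow_le hx.1 h hx.2 hγ₀ (by linarith))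
    (fun x _ h₁ h₂ => by
      refine (norm_sub_le _ _).trans ?_
      rw [norm_mul, norm_cpow_real, ← ofReal_neg, norm_cpow_real, norm_div, RCLike.norm_two]
      obtain ⟨hf, hρ⟩ := hB x h₁ h₂
      have hB₀ : 0 ≤ B := (norm_nonneg _).trans hf
      exact add_le_add (mul_le_mul (Real.rpow_le_rpow (norm_nonneg _) hf (by linarith))
        (by linarith) (by positivity) (by positivity))
        (Real.rpow_le_rpow_of_nonpos (by norm_num) h₁ (by linarith)))
  exact ⟨C, hC, fun x hx0 harg hx => h x ⟨hx0, harg⟩ hx⟩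

lemma bdf3_eq_inv_mul (τ : ℝ) (ξ : ℂ) : bdf3 τ ξ = (τ : ℂ)⁻¹ * bdf3 1 ξ := by
  simp [bdf3]

lemma ofReal_inv_mul_cpow {τ : ℝ} (hτ : 0 ≤ τ) (a : ℂ) (s : ℝ) :
    ((τ : ℂ)⁻¹ * a) ^ (s : ℂ) = ((τ ^ (-s) : ℝ) : ℂ) * a ^ (s : ℂ) := by
  rw [← ofReal_inv, ofReal_mul_cpow (inv_nonneg.2 hτ), ← ofReal_cpow (inv_nonneg.2 hτ),
    Real.inv_rpow hτ, Real.rpow_neg hτ]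

lemma rpow_mul_mul_rpow_eq {τ t : ℝ} (hτ : 0 < τ) (ht : 0 ≤ t) (a b : ℝ) :
    τ ^ a * (t * τ) ^ b = τ ^ (a + b) * t ^ b := by
  rw [Real.mul_rpow ht hτ.le, Real.rpow_add hτ]; ring

lemma exists_norm_cpow_sub_bdf3_cpow_le {α R : ℝ} (hα₀ : 0 ≤ α) (hα₃ : α ≤ 3)
    (hR : R < 2 * π) :
    ∃ C > 0, ∀ τ > 0, ∀ z : ℂ, z ≠ 0 → |arg z| ≤ 2 * π / 3 → ‖z‖ * τ ≤ R →
      ‖z ^ (α : ℂ) - bdf3 τ (Complex.exp (-z * τ)) ^ (α : ℂ)‖ ≤ C * τ ^ 3 * ‖z‖ ^ (α + 3) := by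
  obtain ⟨C, hC, h⟩ := exists_norm_cpow_sub_bdf3_one_exp_neg_cpow_le hα₀ hα₃ hR
  refine ⟨C, hC, fun τ hτ z hz0 harg hzR => ?_⟩
  have hτ' : (τ : ℂ) ≠ 0 := ofReal_ne_zero.2 hτ.ne'
  have hnorm : ‖z * τ‖ = ‖z‖ * τ := by simp [abs_of_pos hτ]
  have hx := h (z * τ) (mul_ne_zero hz0 hτ') (by rwa [arg_mul_real hτ]) (hnorm ▸ hzR)
  have hz : z ^ (α : ℂ) = ((τ ^ (-α) : ℝ) : ℂ) * (z * τ) ^ (α : ℂ) := by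
    rw [← ofReal_inv_mul_cpow hτ.le]; congr 1; field_simp
  rw [hz, bdf3_eq_inv_mul, ofReal_inv_mul_cpow hτ.le, neg_mul, ← mul_sub, norm_mul, norm_real,
    Real.norm_of_nonneg (by positivity)]
  calc _ ≤ τ ^ (-α) * (C * (‖z‖ * τ) ^ (α + 3)) := by gcongr; rwa [hnorm] at hx
    _ = C * (τ ^ (-α) * (‖z‖ * τ) ^ (α + 3)) := by ring
    _ = C * τ ^ 3 * ‖z‖ ^ (α + 3) := by
      rw [rpow_mul_mul_rpow_eq hτ (norm_nonneg z), neg_add_cancel_left]; norm_cast; ring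

lemma exists_norm_bdf3_cpow_mul_rho2_sub_cpow_le_and_norm_le {γ R : ℝ} (hγ₀ : 0 ≤ γ) (hγ₃ : γ ≤ 3)
    (hR : R < 2 * π) :
    ∃ C > 0, ∀ τ > 0, ∀ z : ℂ, z ≠ 0 → |arg z| ≤ 2 * π / 3 → ‖z‖ * τ ≤ R →
      ‖bdf3 τ (Complex.exp (-z * τ)) ^ ((3 - γ : ℝ) : ℂ) * (rho2 (Complex.exp (-z * τ)) / 2) *
          (τ : ℂ) ^ 3 - z ^ (-(γ : ℂ))‖ ≤ C * τ ^ 3 * ‖z‖ ^ (3 - γ) ∧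
      ‖bdf3 τ (Complex.exp (-z * τ)) ^ ((3 - γ : ℝ) : ℂ) * (rho2 (Complex.exp (-z * τ)) / 2) *
          (τ : ℂ) ^ 3‖ ≤ C * ‖z‖ ^ (-γ) := by
  obtain ⟨C, hC, h⟩ := exists_norm_bdf3_one_exp_neg_cpow_mul_rho2_sub_cpow_le hγ₀ hγ₃ hR
  refine ⟨max C (1 + C * R ^ 3), lt_max_of_lt_left hC, fun τ hτ z hz0 harg hzR => ?_⟩
  have hτ' : (τ : ℂ) ≠ 0 := ofReal_ne_zero.2 hτ.ne'
  have hnorm : ‖z * τ‖ = ‖z‖ * τ := by simp [abs_of_pos hτ]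
  have hx := h (z * τ) (mul_ne_zero hz0 hτ') (by rwa [arg_mul_real hτ]) (hnorm ▸ hzR)
  rw [hnorm] at hx
  have hτ3 : τ ^ (-(3 - γ)) * τ ^ 3 = τ ^ γ := by
    rw [← Real.rpow_natCast, ← Real.rpow_add hτ]; norm_num
  have hz : z ^ (-(γ : ℂ)) = ((τ ^ γ : ℝ) : ℂ) * (z * τ) ^ (-(γ : ℂ)) := by
    have := ofReal_inv_mul_cpow hτ.le (z * τ) (-γ)
    rw [neg_neg] at this
    rw [← ofReal_neg, ← this]; congr 1; field_simp
  have hw : bdf3 τ (Complex.exp (-z * τ)) ^ ((3 - γ : ℝ) : ℂ) *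
      (rho2 (Complex.exp (-z * τ)) / 2) * (τ : ℂ) ^ 3 = ((τ ^ γ : ℝ) : ℂ) *
      (bdf3 1 (Complex.exp (-(z * τ))) ^ ((3 - γ : ℝ) : ℂ) *
        (rho2 (Complex.exp (-(z * τ))) / 2)) := by
    rw [bdf3_eq_inv_mul, ofReal_inv_mul_cpow hτ.le, neg_mul, ← hτ3]; push_cast; ring
  have hτγ : 0 ≤ τ ^ γ := by positivity
  have hdiff : ‖bdf3 τ (Complex.exp (-z * τ)) ^ ((3 - γ : ℝ) : ℂ) *
      (rho2 (Complex.exp (-z * τ)) / 2) * (τ : ℂ) ^ 3 - z ^ (-(γ : ℂ))‖ ≤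
        C * τ ^ 3 * ‖z‖ ^ (3 - γ) := by
    rw [hw, hz, ← mul_sub, norm_mul, norm_real, Real.norm_of_nonneg hτγ]
    calc _ ≤ τ ^ γ * (C * (‖z‖ * τ) ^ (3 - γ)) := by gcongr
      _ = C * (τ ^ γ * (‖z‖ * τ) ^ (3 - γ)) := by ring
      _ = C * τ ^ 3 * ‖z‖ ^ (3 - γ) := by
        rw [rpow_mul_mul_rpow_eq hτ (norm_nonneg z), add_sub_cancel]; norm_cast; ring
  refine ⟨hdiff.trans (by gcongr; exact le_max_left _ _), ?_⟩
  have hzγ : ‖z ^ (-(γ : ℂ))‖ = ‖z‖ ^ (-γ) := by rw [← ofReal_neg, norm_cpow_real]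
  have hsplit : τ ^ 3 * ‖z‖ ^ (3 - γ) = (‖z‖ * τ) ^ 3 * ‖z‖ ^ (-γ) := by
    rw [sub_eq_add_neg, Real.rpow_add (norm_pos_iff.2 hz0)]; norm_cast; ring
  have hR₀ : 0 ≤ ‖z‖ * τ := by positivity
  calc _ ≤ ‖z ^ (-(γ : ℂ))‖ + C * τ ^ 3 * ‖z‖ ^ (3 - γ) :=
        (norm_le_norm_add_norm_sub' _ _).trans (add_le_add le_rfl hdiff)
    _ ≤ ‖z‖ ^ (-γ) + C * (R ^ 3 * ‖z‖ ^ (-γ)) := by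
        rw [hzγ, mul_assoc, hsplit]; gcongr
    _ = (1 + C * R ^ 3) * ‖z‖ ^ (-γ) := by ring
    _ ≤ _ := by gcongr; exact le_max_right _ _

lemma abs_arg_le_of_mem_Dset {τ θ : ℝ} {z : ℂ} (hz : z ∈ Dset τ θ) : |arg z| ≤ θ := by
  rcases hz.2 with h | h
  · exact h.1.le
  · exact h.2

lemma norm_mul_le_of_mem_Dset {τ θ : ℝ} {z : ℂ} (hτ : 0 < τ)
    (hθ : θ ∈ Icc (π / 2) (2 * π / 3)) (hz : z ∈ Dset τ θ) : ‖z‖ * τ ≤ 3 * π / 2 := by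
  rcases hz.2 with ⟨harg, him⟩ | ⟨hnorm, -⟩
  · -- on the rays, `|Im z| = ‖z‖ sin θ` and `sin θ ≥ 2 / 3` by Jordan's inequality
    have hsin : 2 / 3 ≤ Real.sin θ := by
      rw [← Real.sin_pi_sub]
      have := Real.mul_le_sin (x := π - θ) (by linarith [hθ.2, Real.pi_pos]) (by linarith [hθ.1])
      have : 2 / π * (π - θ) ≥ 2 / 3 := by
        rw [ge_iff_le, div_mul_eq_mul_div, le_div_iff₀ Real.pi_pos]; linarith [hθ.2]
      linarith
    have him' : ‖z‖ * Real.sin θ = |z.im| := by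
      rw [← harg, ← Real.abs_sin_eq_sin_abs_of_abs_le_pi (abs_arg_le_pi z), ← abs_norm, ← abs_mul,
        norm_mul_sin_arg]
    have : ‖z‖ * Real.sin θ * τ ≤ π := by
      rw [him']; calc |z.im| * τ ≤ π / τ * τ := by gcongr
        _ = π := div_mul_cancel₀ _ hτ.ne'
    nlinarith [mul_le_mul_of_nonneg_left hsin (by positivity : 0 ≤ ‖z‖ * τ)]
  · calc ‖z‖ * τ ≤ 1 / τ * τ := by gcongr
      _ = 1 := div_mul_cancel₀ _ hτ.ne'
      _ ≤ 3 * π / 2 := by linarith [Real.pi_gt_three]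

lemma norm_smul_sub_smul_le {𝕜 E : Type*} [NormedField 𝕜] [SeminormedAddCommGroup E]
    [NormedSpace 𝕜 E] (a b : 𝕜) (u v : E) :
    ‖a • u - b • v‖ ≤ ‖a‖ * ‖u - v‖ + ‖a - b‖ * ‖v‖ := by
  rw [show a • u - b • v = a • (u - v) + (a - b) • v by rw [smul_sub, sub_smul]; abel,
    ← norm_smul, ← norm_smul]
  exact norm_add_le _ _

lemma norm_sub_le_of_sub_eq_smul_comp {𝕜 E : Type*} [NontriviallyNormedField 𝕜]
    [SeminormedAddCommGroup E] [NormedSpace 𝕜 E] {R₁ R₂ : E →L[𝕜] E} {μ : 𝕜}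
    (h : R₂ - R₁ = μ • (R₂ ∘L R₁)) : ‖R₂ - R₁‖ ≤ ‖μ‖ * (‖R₂‖ * ‖R₁‖) := by
  rw [h, norm_smul]
  exact mul_le_mul_of_nonneg_left (ContinuousLinearMap.opNorm_comp_le R₂ R₁) (norm_nonneg μ)

theorem bdf3_noise_term_operator_estimate_general
    {H : Type*} [NormedAddCommGroup H] [InnerProductSpace ℂ H]
    (α γ : ℝ) (hα : α ∈ Ioo (1 : ℝ) 2) (hγ : γ ∈ Ioo (0 : ℝ) 1) (M : ℝ) (hM : 0 < M) :
    ∃ θ₀ ∈ Ioo (Real.pi / 2) Real.pi, ∀ θ ∈ Ioo (Real.pi / 2) θ₀,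
      ∃ c > (0 : ℝ),
        ∀ τ : ℝ, 0 < τ → ∀ z ∈ Dset τ θ,
          ∀ R₁ R₂ : H →L[ℂ] H,
            ‖R₁‖ ≤ M * ‖z‖ ^ (-α) →
            ‖R₂‖ ≤ M * ‖z‖ ^ (-α) →
            R₂ - R₁ = (z ^ (α : ℂ) - (bdf3 τ (Complex.exp (-z * τ))) ^ (α : ℂ)) •
              (R₂ ∘L R₁) →
            ‖((bdf3 τ (Complex.exp (-z * τ))) ^ (((3 - γ : ℝ)) : ℂ) *
                  (rho2 (Complex.exp (-z * τ)) / 2) * (τ : ℂ) ^ 3) • R₂ -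
                (z ^ (-(γ : ℂ))) • R₁‖ ≤
              c * τ ^ 3 * ‖z‖ ^ (3 - α - γ) := by
  have hR : 3 * π / 2 < 2 * π := by linarith [Real.pi_pos]
  obtain ⟨C₁, hC₁, hμ⟩ :=
    exists_norm_cpow_sub_bdf3_cpow_le (α := α) (by linarith [hα.1]) (by linarith [hα.2]) hR
  obtain ⟨C₂, hC₂, hA⟩ :=
    exists_norm_bdf3_cpow_mul_rho2_sub_cpow_le_and_norm_le (γ := γ) hγ.1.le (by linarith [hγ.2]) hR
  refine ⟨2 * π / 3, ⟨by linarith [Real.pi_pos], by linarith [Real.pi_pos]⟩,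
    fun θ hθ => ⟨C₂ * C₁ * M ^ 2 + C₂ * M, by positivity, ?_⟩⟩
  intro τ hτ z hz R₁ R₂ hR₁ hR₂ hres
  have harg := (abs_arg_le_of_mem_Dset hz).trans hθ.2.le
  have hzτ := norm_mul_le_of_mem_Dset hτ ⟨hθ.1.le, hθ.2.le⟩ hz
  obtain ⟨hdiff, hnorm⟩ := hA τ hτ z hz.1 harg hzτ
  have hRR : ‖R₂ - R₁‖ ≤ C₁ * τ ^ 3 * ‖z‖ ^ (α + 3) * (M * ‖z‖ ^ (-α) * (M * ‖z‖ ^ (-α))) :=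
    (norm_sub_le_of_sub_eq_smul_comp hres).trans <| by
      gcongr
      exact hμ τ hτ z hz.1 harg hzτ
  have ht : 0 < ‖z‖ := norm_pos_iff.2 hz.1
  have h₁ : ‖z‖ ^ (-γ) * ‖z‖ ^ (α + 3) * ‖z‖ ^ (-α) * ‖z‖ ^ (-α) = ‖z‖ ^ (3 - α - γ) := by
    simp only [← Real.rpow_add ht]; ring_nf
  have h₂ : ‖z‖ ^ (3 - γ) * ‖z‖ ^ (-α) = ‖z‖ ^ (3 - α - γ) := by
    rw [← Real.rpow_add ht]; ring_nf
  calc _ ≤ _ := norm_smul_sub_smul_le _ _ R₂ R₁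
    _ ≤ C₂ * ‖z‖ ^ (-γ) * (C₁ * τ ^ 3 * ‖z‖ ^ (α + 3) * (M * ‖z‖ ^ (-α) * (M * ‖z‖ ^ (-α)))) +
        C₂ * τ ^ 3 * ‖z‖ ^ (3 - γ) * (M * ‖z‖ ^ (-α)) := by
      gcongr
    _ = _ := by linear_combination (C₂ * C₁ * M ^ 2 * τ ^ 3) * h₁ + (C₂ * M * τ ^ 3) * h₂

theorem bdf3_noise_term_operator_estimate
    {H : Type*} [NormedAddCommGroup H] [InnerProductSpace ℂ H] [CompleteSpace H]
    (α γ : ℝ) (hα : α ∈ Ioo (1 : ℝ) 2) (hγ : γ ∈ Ioo (0 : ℝ) 1) (M : ℝ) (hM : 0 < M) :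
    ∃ θ₀ ∈ Ioo (Real.pi / 2) Real.pi, ∀ θ ∈ Ioo (Real.pi / 2) θ₀,
      ∃ c > (0 : ℝ),
        ∀ τ : ℝ, 0 < τ → ∀ z ∈ Dset τ θ,
          ∀ R₁ R₂ : H →L[ℂ] H,
            ‖R₁‖ ≤ M * ‖z‖ ^ (-α) →
            ‖R₂‖ ≤ M * ‖z‖ ^ (-α) →
            R₂ - R₁ = (z ^ (α : ℂ) - (bdf3 τ (Complex.exp (-z * τ))) ^ (α : ℂ)) •
              (R₂ ∘L R₁) →
            ‖((bdf3 τ (Complex.exp (-z * τ))) ^ (((3 - γ : ℝ)) : ℂ) *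
                  (rho2 (Complex.exp (-z * τ)) / 2) * (τ : ℂ) ^ 3) • R₂ -
                (z ^ (-(γ : ℂ))) • R₁‖ ≤
              c * τ ^ 3 * ‖z‖ ^ (3 - α - γ) :=
  bdf3_noise_term_operator_estimate_general α γ hα hγ M hM
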